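/- The family $\mathcal M=\{E[\int_\tau^T u(r)X(r)\,dr\mid\mathcal F_\tau] : u\in U(\tau,Y)\}$ is closed under pairwise maximization: if $M_1,M_2\in\mathcal M$ then $M_1\vee M_2\in\mathcal M$. -/

import Mathlib

open MeasureTheory Set Filter
open scoped ENNReal

noncomputable section

variable {Ω : Type*} {m0 : MeasurableSpace Ω}

/-- The set `U(τ,Y)` of admissible controls: adapted, `[0,L]`-valued processes `u`
with `∫_τ^T u(s) ds ≤ 1 - Y`. -/
def controlSet (ℱ : MeasureTheory.Filtration ℝ m0) (L T : ℝ) (τ Y : Ω → ℝ) :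
    Set (ℝ → Ω → ℝ) :=
  {u | MeasureTheory.Adapted ℱ u ∧ (∀ s ω, u s ω ∈ Set.Icc 0 L) ∧
    ∀ ω, (∫ s in (τ ω)..T, u s ω) ≤ 1 - Y ω}

/-- Total reward of the control `u`. -/
def payoff (X : ℝ → Ω → ℝ) (T : ℝ) (τ : Ω → ℝ) (u : ℝ → Ω → ℝ) (ω : Ω) : ℝ :=
  ∫ r in (τ ω)..T, u r ω * X r ω

/-- `J` is an essential supremum of the family `S` of random variables. -/
def IsEssSupFamily (μ : MeasureTheory.Measure Ω) (S : Set (Ω → ℝ)) (J : Ω → ℝ) : Prop :=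
  (∀ f ∈ S, f ≤ᵐ[μ] J) ∧ ∀ g : Ω → ℝ, (∀ f ∈ S, f ≤ᵐ[μ] g) → J ≤ᵐ[μ] g

/-- The family of conditional expected rewards `E[∫_τ^T u X | m]`, `u ∈ U(τ,Y)`. -/
def condPayoffs (μ : MeasureTheory.Measure Ω) (m : MeasurableSpace Ω) (X : ℝ → Ω → ℝ)
    (ℱ : MeasureTheory.Filtration ℝ m0) (L T : ℝ) (τ Y : Ω → ℝ) : Set (Ω → ℝ) :=
  {f | ∃ u ∈ controlSet ℱ L T τ Y, f =ᵐ[μ] μ[payoff X T τ u | m]}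

/-! Given admissible controls `u₁, u₂` with rewards `f₁, f₂`, the event
`s = {E[f₂ | 𝓕_τ] ≤ E[f₁ | 𝓕_τ]}` is `𝓕_τ`-measurable, so the control that follows `u₂` but
switches to `u₁` at time `τ` on `s` is again adapted, and admissible. On `[τ, T]` it agrees with
`u₁` on `s` and with `u₂` off `s`, so its reward is `s.piecewise f₁ f₂`, and pulling the
`𝓕_τ`-measurable event out of the conditional expectation gives `E[f₁ | 𝓕_τ] ∨ E[f₂ | 𝓕_τ]`. -/

namespace MeasureTheory

variable {m : MeasurableSpace Ω} {μ : Measure[m0] Ω}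

open scoped Classical in
theorem condExp_piecewise {E : Type*} [NormedAddCommGroup E] [NormedSpace ℝ E] [CompleteSpace E]
    {f g : Ω → E} (hf : Integrable f μ) (hg : Integrable g μ) {s : Set Ω}
    (hs : MeasurableSet[m] s) :
    μ[s.piecewise f g | m] =ᵐ[μ] s.piecewise (μ[f | m]) (μ[g | m]) := by
  by_cases hm : m ≤ m0
  · rw [← Set.indicator_add_compl_eq_piecewise, ← Set.indicator_add_compl_eq_piecewise]
    refine (condExp_add (hf.indicator (hm s hs)) (hg.indicator (hm s hs).compl) m).trans ?_
    exact (condExp_indicator hf hs).add (condExp_indicator hg hs.compl)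
  · simp [condExp_of_not_le hm]

open scoped Classical in
theorem exists_measurableSet_condExp_piecewise_eq_max {f g : Ω → ℝ}
    (hf : 0 ≤ᵐ[μ] f) (hg : 0 ≤ᵐ[μ] g) :
    ∃ s, MeasurableSet[m] s ∧
      μ[s.piecewise f g | m] =ᵐ[μ] fun ω => max (μ[f | m] ω) (μ[g | m] ω) := by
  -- A non-integrable reward has conditional expectation `0` (a junk value), which the other,
  -- nonnegative, conditional expectation dominates.
  by_cases hg_int : Integrable g μ
  swap
  · refine ⟨Set.univ, MeasurableSet.univ, ?_⟩
    filter_upwards [condExp_nonneg (m := m) hf] with ω hω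
    simpa [condExp_of_not_integrable hg_int] using hω
  by_cases hf_int : Integrable f μ
  swap
  · refine ⟨∅, MeasurableSet.empty, ?_⟩
    filter_upwards [condExp_nonneg (m := m) hg] with ω hω
    simpa [condExp_of_not_integrable hf_int] using hω
  have hs : MeasurableSet[m] {ω | μ[g | m] ω ≤ μ[f | m] ω} :=
    measurableSet_le stronglyMeasurable_condExp.measurable stronglyMeasurable_condExp.measurable
  refine ⟨_, hs, ?_⟩
  filter_upwards [condExp_piecewise hf_int hg_int hs] with ω hω
  rw [hω]
  by_cases h : μ[g | m] ω ≤ μ[f | m] ω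
  · simp [h]
  · simp [h, (not_le.mp h).le]

end MeasureTheory

open scoped Classical in
def switchAt {ι β : Type*} [Preorder ι] (τ : Ω → ι) (s : Set Ω) (u₁ u₂ : ι → Ω → β) :
    ι → Ω → β :=
  fun r => (s ∩ {ω | τ ω ≤ r}).piecewise (u₁ r) (u₂ r)

section switchAt

variable {s : Set Ω}

theorem MeasureTheory.Adapted.switchAt {ι β : Type*} [Preorder ι] [MeasurableSpace β]
    {ℱ : Filtration ι m0} {τ : Ω → ι} {u₁ u₂ : ι → Ω → β}
    (hτ : IsStoppingTime ℱ (fun ω => (τ ω : WithTop ι)))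
    (hs : MeasurableSet[hτ.measurableSpace] s) (h₁ : Adapted ℱ u₁) (h₂ : Adapted ℱ u₂) :
    Adapted ℱ (switchAt τ s u₁ u₂) := by
  intro r
  have hsr : MeasurableSet[ℱ r] (s ∩ {ω | τ ω ≤ r}) := by
    simpa only [WithTop.coe_le_coe] using hs.2 r
  exact (h₁ r).piecewise hsr (h₂ r)

variable {u₁ u₂ : ℝ → Ω → ℝ}

open scoped Classical in
theorem intervalIntegral_switchAt {τ : Ω → ℝ} {T : ℝ} {ω : Ω} (hω : τ ω ≤ T)
    (F : ℝ → ℝ → ℝ) :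
    ∫ r in τ ω..T, F r (switchAt τ s u₁ u₂ r ω) =
      if ω ∈ s then ∫ r in τ ω..T, F r (u₁ r ω) else ∫ r in τ ω..T, F r (u₂ r ω) := by
  split_ifs with h
  all_goals
    refine intervalIntegral.integral_congr fun r hr => ?_
    rw [Set.uIcc_of_le hω] at hr
    simp [switchAt, h, hr.1]

theorem switchAt_mem_controlSet {ℱ : Filtration ℝ m0} {L T : ℝ} {τ Y : Ω → ℝ}
    (hτ : IsStoppingTime ℱ (fun ω => (τ ω : WithTop ℝ)))
    (hs : MeasurableSet[hτ.measurableSpace] s) (hτT : ∀ ω, τ ω ≤ T)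
    (h₁ : u₁ ∈ controlSet ℱ L T τ Y) (h₂ : u₂ ∈ controlSet ℱ L T τ Y) :
    switchAt τ s u₁ u₂ ∈ controlSet ℱ L T τ Y := by
  refine ⟨h₁.1.switchAt hτ hs h₂.1, fun r ω => ?_, fun ω => ?_⟩
  · by_cases h : ω ∈ s ∩ {ω | τ ω ≤ r}
    · simpa [switchAt, h] using h₁.2.1 r ω
    · simpa [switchAt, h] using h₂.2.1 r ω
  · rw [intervalIntegral_switchAt (hτT ω) fun _ x => x]
    split_ifs
    exacts [h₁.2.2 ω, h₂.2.2 ω]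

open scoped Classical in
theorem payoff_switchAt {X : ℝ → Ω → ℝ} {T : ℝ} {τ : Ω → ℝ} (hτT : ∀ ω, τ ω ≤ T) :
    payoff X T τ (switchAt τ s u₁ u₂) = s.piecewise (payoff X T τ u₁) (payoff X T τ u₂) := by
  funext ω
  rw [payoff, intervalIntegral_switchAt (hτT ω) fun r x => x * X r ω]
  simp only [Set.piecewise, payoff]

end switchAt

theorem payoff_nonneg {X : ℝ → Ω → ℝ} {T : ℝ} {τ : Ω → ℝ} {u : ℝ → Ω → ℝ}
    (hX : ∀ t ω, 0 ≤ X t ω) (hτT : ∀ ω, τ ω ≤ T) (hu : ∀ t ω, 0 ≤ u t ω) :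
    0 ≤ payoff X T τ u :=
  fun ω => intervalIntegral.integral_nonneg (hτT ω) fun r _ => mul_nonneg (hu r ω) (hX r ω)

theorem condPayoffs_closed_under_max_general
    (μ : MeasureTheory.Measure Ω)
    (ℱ : MeasureTheory.Filtration ℝ m0)
    (T L : ℝ)
    (X : ℝ → Ω → ℝ)
    (hXnn : ∀ t ω, 0 ≤ X t ω)
    (τ : Ω → ℝ) (hτ : MeasureTheory.IsStoppingTime ℱ (fun ω => (τ ω : WithTop ℝ)))
    (hτT : ∀ ω, τ ω ∈ Set.Icc 0 T)
    (Y : Ω → ℝ)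
    (M₁ M₂ : Ω → ℝ)
    (hM₁ : M₁ ∈ condPayoffs μ hτ.measurableSpace X ℱ L T τ Y)
    (hM₂ : M₂ ∈ condPayoffs μ hτ.measurableSpace X ℱ L T τ Y) :
    (fun ω => max (M₁ ω) (M₂ ω)) ∈ condPayoffs μ hτ.measurableSpace X ℱ L T τ Y := by
  obtain ⟨u₁, hu₁, hM₁⟩ := hM₁
  obtain ⟨u₂, hu₂, hM₂⟩ := hM₂
  have hτT : ∀ ω, τ ω ≤ T := fun ω => (hτT ω).2
  obtain ⟨s, hs, hmax⟩ := exists_measurableSet_condExp_piecewise_eq_max (m := hτ.measurableSpace)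
    (.of_forall (payoff_nonneg hXnn hτT fun t ω => (hu₁.2.1 t ω).1))
    (.of_forall (payoff_nonneg hXnn hτT fun t ω => (hu₂.2.1 t ω).1))
  refine ⟨switchAt τ s u₁ u₂, switchAt_mem_controlSet hτ hs hτT hu₁ hu₂, ?_⟩
  rw [payoff_switchAt hτT]
  filter_upwards [hM₁, hM₂, hmax] with ω h₁ h₂ hmax
  rw [h₁, h₂, hmax]

/-- the family `𝓜 = {E[∫_τ^T u X dr | 𝓕_τ] : u ∈ U(τ,Y)}` is
closed under pairwise maximization. -/
theorem condPayoffs_closed_under_max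
    (μ : MeasureTheory.Measure Ω) [IsProbabilityMeasure μ]
    (ℱ : MeasureTheory.Filtration ℝ m0)
    (T L p : ℝ) (hT : 0 < T) (hL : 0 < L) (hp : 1 < p)
    (X : ℝ → Ω → ℝ) (hXad : MeasureTheory.Adapted ℱ X)
    (hXnn : ∀ t ω, 0 ≤ X t ω)
    (hXrc : ∀ ω t, ContinuousWithinAt (fun s => X s ω) (Set.Ici t) t)
    (hXint : MeasureTheory.Integrable (fun ω => ⨆ t ∈ Set.Icc (0:ℝ) T, X t ω ^ p) μ)
    (τ : Ω → ℝ) (hτ : MeasureTheory.IsStoppingTime ℱ (fun ω => (τ ω : WithTop ℝ)))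
    (hτT : ∀ ω, τ ω ∈ Set.Icc 0 T)
    (Y : Ω → ℝ) (hY : Measurable[hτ.measurableSpace] Y) (hY1 : ∀ ω, Y ω ≤ 1)
    (M₁ M₂ : Ω → ℝ)
    (hM₁ : M₁ ∈ condPayoffs μ hτ.measurableSpace X ℱ L T τ Y)
    (hM₂ : M₂ ∈ condPayoffs μ hτ.measurableSpace X ℱ L T τ Y) :
    (fun ω => max (M₁ ω) (M₂ ω)) ∈ condPayoffs μ hτ.measurableSpace X ℱ L T τ Y :=
  condPayoffs_closed_under_max_general μ ℱ T L X hXnn τ hτ hτT Y M₁ M₂ hM₁ hM₂
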